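/- If f is uniformly continuous on [0, ∞) and belongs to B_{ρ_γ}(ℝ₊), then the weighted modulus of smoothness Ω_{ρ_γ}(f; δ) tends to 0 as δ → 0⁺. -/
import Mathlib


/-- The weighted modulus of smoothness `Ω_{ρ_γ}(f; δ)`. -/
noncomputable def Omega (f : ℝ → ℝ) (γ δ : ℝ) : ℝ :=
  sSup {y : ℝ | ∃ x h : ℝ, 0 ≤ x ∧ 0 < h ∧ h ≤ δ ∧
    y = |f (x + h) - f x| / (1 + (x + h) ^ (2 + γ))}

/-- The weighted norm `‖f‖_{ρ_γ}` on `[0, ∞)`. -/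
noncomputable def wnorm (f : ℝ → ℝ) (γ : ℝ) : ℝ :=
  sSup {y : ℝ | ∃ x : ℝ, 0 ≤ x ∧ y = |f x| / (1 + x ^ (γ + 2))}

theorem Omega_tendsto_zero (f : ℝ → ℝ) (γ : ℝ) (hγ : 0 ≤ γ)
    (hf : ∃ M : ℝ, ∀ x : ℝ, 0 ≤ x → |f x| ≤ M * (1 + x ^ (γ + 2)))
    (hfu : UniformContinuousOn f (Set.Ici 0)) :
    Filter.Tendsto (fun δ => Omega f γ δ) (nhdsWithin 0 (Set.Ioi 0)) (nhds 0) := by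
  rw [Metric.tendsto_nhdsWithin_nhds]
  intro ε hε
  obtain ⟨δ₀, hδ₀, hU⟩ := (Metric.uniformContinuousOn_iff).1 hfu (ε / 2) (by linarith)
  refine ⟨δ₀, hδ₀, fun δ hδ hd => ?_⟩
  simp only [Set.mem_Ioi] at hδ
  rw [Real.dist_eq, sub_zero] at hd
  have hδlt : δ < δ₀ := lt_of_le_of_lt (le_abs_self δ) hd
  -- every element of the set is between 0 and ε/2
  set S := {y : ℝ | ∃ x h : ℝ, 0 ≤ x ∧ 0 < h ∧ h ≤ δ ∧
    y = |f (x + h) - f x| / (1 + (x + h) ^ (2 + γ))} with hS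
  have hbound : ∀ y ∈ S, y ≤ ε / 2 := by
    rintro y ⟨x, h, hx, hh, hhd, rfl⟩
    have hxh : (0:ℝ) ≤ x + h := by linarith
    have hden : (1:ℝ) ≤ 1 + (x + h) ^ (2 + γ) := by
      have := Real.rpow_nonneg hxh (2 + γ)
      linarith
    have hnum : |f (x + h) - f x| ≤ ε / 2 := by
      have := hU (x + h) hxh x (Set.mem_Ici.2 hx) (by
        rw [Real.dist_eq]
        have : |x + h - x| = h := by rw [add_sub_cancel_left, abs_of_pos hh]
        rw [this]; linarith)
      rw [Real.dist_eq] at this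
      linarith
    calc |f (x + h) - f x| / (1 + (x + h) ^ (2 + γ))
        ≤ |f (x + h) - f x| / 1 :=
          div_le_div_of_nonneg_left (abs_nonneg _) one_pos hden
      _ = |f (x + h) - f x| := div_one _
      _ ≤ ε / 2 := hnum
  have hne : S.Nonempty := ⟨_, 0, δ, le_refl 0, hδ, le_refl δ, rfl⟩
  have hbdd : BddAbove S := ⟨ε / 2, hbound⟩
  have hsup_le : sSup S ≤ ε / 2 := Real.sSup_le hbound (by linarith)
  have hsup_nonneg : 0 ≤ sSup S := by
    obtain ⟨y, hy⟩ := hne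
    refine le_trans ?_ (le_csSup hbdd hy)
    obtain ⟨x, h, hx, hh, hhd, rfl⟩ := hy
    positivity
  rw [Real.dist_eq, sub_zero]
  have : Omega f γ δ = sSup S := rfl
  rw [this, abs_of_nonneg hsup_nonneg]
  linarith
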